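/- arXiv:2301.03576 — 2 statements merged into one kernel-verified Lean document; each statement's English description precedes it below -/
import Mathlib

section
/- Let E be a finite-dimensional real inner product space, μ ≥ 0, f : E → ℝ differentiable and μ-strongly convex, x* a minimizer of f, and x₀ ∈ E. Suppose X, Z : [0,∞) → E are continuously differentiable with X(0) = Z(0) = x₀ and satisfy, for all t > 0, Ẋ(t) = (2/t)·cothc((√μ/2)·t)·(Z(t) − X(t)) and Ż(t) = (t/2)·tanhc((√μ/2)·t)·(μ·X(t) − μ·Z(t) − ∇f(X(t))). Then for all t > 0, f(X(t)) − f(x*) ≤ (2/t²)·cschc²((√μ/2)·t)·‖x₀ − x*‖². -/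
open scoped RealInnerProductSpace

noncomputable def sinhc (x : ℝ) : ℝ := if x = 0 then 1 else Real.sinh x / x
noncomputable def cschc (x : ℝ) : ℝ := 1 / sinhc x
noncomputable def tanhc (x : ℝ) : ℝ := sinhc x / Real.cosh x
noncomputable def cothc (x : ℝ) : ℝ := 1 / tanhc x

/-!
With `s = √μ / 2` and `φ(t) = sinh(s t) / s`, the energy
`V(t) = φ(t)² / 2 · (f(X t) − f x*) + cosh²(s t) · ‖Z t − x*‖²`
satisfies
`V' = φ cosh(s t) · (f(X) − f x* − ⟪∇f(X), X − x*⟫ + μ ⟪Z − x*, X − x*⟫ − μ/2 ‖Z − x*‖²)`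
along the flow, because `cosh² = 1 + s² φ²` makes the `⟪∇f(X), Z − x*⟫` terms cancel.
Strong convexity bounds the bracket by `−μ/2 ‖X − Z‖² ≤ 0`, so `V` is antitone, and
`φ(t)² / 2 · (f(X t) − f x*) ≤ V t ≤ V 0 = ‖x₀ − x*‖²` is the claimed rate.
-/

open Real

lemma sinhc_pos (x : ℝ) : 0 < sinhc x := by
  unfold sinhc
  rcases lt_trichotomy x 0 with h | rfl | h
  · rw [if_neg h.ne]
    exact div_pos_of_neg_of_neg (sinh_neg_iff.2 h) h
  · simp
  · rw [if_neg h.ne']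
    exact div_pos (sinh_pos_iff.2 h) h

/-- `sinh (s t) / s`, extended continuously to `s = 0`. -/
noncomputable def scaledSinh (s t : ℝ) : ℝ := t * sinhc (s * t)

@[simp]
lemma scaledSinh_zero_right (s : ℝ) : scaledSinh s 0 = 0 := by simp [scaledSinh]

lemma scaledSinh_pos (s : ℝ) {t : ℝ} (ht : 0 < t) : 0 < scaledSinh s t :=
  mul_pos ht (sinhc_pos _)

lemma scaledSinh_eq_sinh_div {s : ℝ} (hs : s ≠ 0) (t : ℝ) :
    scaledSinh s t = sinh (s * t) / s := by
  unfold scaledSinh sinhc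
  rcases eq_or_ne t 0 with rfl | ht
  · simp
  · rw [if_neg (mul_ne_zero hs ht)]
    field_simp

lemma sinh_mul_eq_mul_scaledSinh (s t : ℝ) : sinh (s * t) = s * scaledSinh s t := by
  rcases eq_or_ne s 0 with rfl | hs
  · simp
  · rw [scaledSinh_eq_sinh_div hs]; field_simp

lemma hasDerivAt_scaledSinh (s t : ℝ) : HasDerivAt (scaledSinh s) (cosh (s * t)) t := by
  rcases eq_or_ne s 0 with rfl | hs
  · have : scaledSinh 0 = id := funext fun u => by simp [scaledSinh, sinhc]
    simpa [this] using hasDerivAt_id t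
  · rw [funext (scaledSinh_eq_sinh_div hs)]
    refine (((hasDerivAt_id' t).const_mul s).sinh.div_const s).congr_deriv ?_
    field_simp

lemma two_div_mul_cothc (s t : ℝ) :
    2 / t * cothc (s * t) = 2 * cosh (s * t) / scaledSinh s t := by
  simp only [cothc, tanhc, scaledSinh]
  field_simp

lemma div_two_mul_tanhc (s t : ℝ) :
    t / 2 * tanhc (s * t) = scaledSinh s t / (2 * cosh (s * t)) := by
  simp only [tanhc, scaledSinh]
  ring

lemma two_div_sq_mul_cschc_sq (s t : ℝ) :
    2 / t ^ 2 * cschc (s * t) ^ 2 = 2 / scaledSinh s t ^ 2 := by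
  simp only [cschc, scaledSinh]
  ring

lemma hasDerivAt_cosh_mul_sq (s t : ℝ) :
    HasDerivAt (fun u => cosh (s * u) ^ 2) (2 * s ^ 2 * (scaledSinh s t * cosh (s * t))) t := by
  refine (((hasDerivAt_id' t).const_mul s).cosh.pow 2).congr_deriv ?_
  rw [sinh_mul_eq_mul_scaledSinh]
  ring

section Energy

variable {E : Type*} [NormedAddCommGroup E]

noncomputable def nagEnergy (f : E → ℝ) (s : ℝ) (xstar : E) (X Z : ℝ → E) (t : ℝ) : ℝ :=
  scaledSinh s t ^ 2 / 2 * (f (X t) - f xstar) + cosh (s * t) ^ 2 * ‖Z t - xstar‖ ^ 2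

variable {f : E → ℝ} {μ s : ℝ} {xstar : E} {X Z : ℝ → E}

lemma nagEnergy_zero : nagEnergy f s xstar X Z 0 = ‖Z 0 - xstar‖ ^ 2 := by
  simp [nagEnergy]

lemma continuousOn_nagEnergy (hf : Continuous f) (hX : ContinuousOn X (Set.Ici 0))
    (hZ : ContinuousOn Z (Set.Ici 0)) : ContinuousOn (nagEnergy f s xstar X Z) (Set.Ici 0) := by
  have hφ : Continuous (scaledSinh s) :=
    continuous_iff_continuousAt.2 fun t => (hasDerivAt_scaledSinh s t).continuousAt
  unfold nagEnergy
  apply ContinuousOn.add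
  · exact (hφ.pow 2).continuousOn.div_const 2 |>.mul
      ((hf.comp_continuousOn hX).sub continuousOn_const)
  · exact (by fun_prop : Continuous fun t => cosh (s * t) ^ 2).continuousOn.mul
      ((hZ.sub continuousOn_const).norm.pow 2)

lemma sub_le_of_nagEnergy_le {t : ℝ} (ht : 0 < t) {C : ℝ}
    (hV : nagEnergy f s xstar X Z t ≤ C) : f (X t) - f xstar ≤ 2 / scaledSinh s t ^ 2 * C := by
  have hφ := scaledSinh_pos s ht
  have hZ : 0 ≤ cosh (s * t) ^ 2 * ‖Z t - xstar‖ ^ 2 := by positivity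
  rw [div_mul_eq_mul_div, le_div_iff₀ (by positivity)]
  unfold nagEnergy at hV
  linarith

variable [InnerProductSpace ℝ E] [CompleteSpace E]

lemma hasDerivAt_nagEnergy (hs : 4 * s ^ 2 = μ) {t : ℝ} (ht : 0 < t)
    (hf : DifferentiableAt ℝ f (X t))
    (hX : HasDerivAt X ((2 / t * cothc (s * t)) • (Z t - X t)) t)
    (hZ : HasDerivAt Z ((t / 2 * tanhc (s * t)) • (μ • X t - μ • Z t - gradient f (X t))) t) :
    HasDerivAt (nagEnergy f s xstar X Z)
      (scaledSinh s t * cosh (s * t) *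
        (f (X t) - f xstar - ⟪gradient f (X t), X t - xstar⟫
          + μ * ⟪Z t - xstar, X t - xstar⟫ - μ / 2 * ‖Z t - xstar‖ ^ 2)) t := by
  rw [two_div_mul_cothc] at hX
  rw [div_two_mul_tanhc] at hZ
  have hfX : HasDerivAt (fun u => f (X u) - f xstar)
      ((2 * cosh (s * t) / scaledSinh s t) * ⟪gradient f (X t), Z t - X t⟫) t := by
    have := (hf.hasGradientAt.hasFDerivAt.comp_hasDerivAt t hX).sub_const (f xstar)
    simpa [Function.comp_def, InnerProductSpace.toDual_apply_apply] using this
  have hφ := hasDerivAt_scaledSinh s t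
  have hV : HasDerivAt (nagEnergy f s xstar X Z) _ t :=
    ((hφ.pow 2).div_const 2 |>.mul hfX).add
      ((hasDerivAt_cosh_mul_sq s t).mul (hZ.sub_const xstar).norm_sq)
  refine hV.congr_deriv ?_
  have hφ0 := (scaledSinh_pos s ht).ne'
  have hc0 := (cosh_pos (s * t)).ne'
  have hgrad : ⟪gradient f (X t), Z t - X t⟫
      = ⟪gradient f (X t), Z t - xstar⟫ - ⟪gradient f (X t), X t - xstar⟫ := by
    rw [← inner_sub_right, sub_sub_sub_cancel_right]
  have hflow : ⟪Z t - xstar, μ • X t - μ • Z t - gradient f (X t)⟫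
      = μ * ⟪Z t - xstar, X t - xstar⟫ - μ * ‖Z t - xstar‖ ^ 2
        - ⟪gradient f (X t), Z t - xstar⟫ := by
    have : μ • X t - μ • Z t = μ • (X t - xstar) - μ • (Z t - xstar) := by
      simp only [smul_sub, sub_sub_sub_cancel_right]
    rw [this, inner_sub_right, inner_sub_right, inner_smul_right, inner_smul_right,
      real_inner_self_eq_norm_sq, real_inner_comm (gradient f (X t))]
  rw [inner_smul_right, hgrad, hflow, Pi.pow_apply, ← hs]
  field_simp
  ring

lemma nagEnergy_deriv_nonpos (hμ : 0 ≤ μ)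
    (hsc : ∀ x y : E, f x + ⟪gradient f x, y - x⟫ + μ / 2 * ‖y - x‖ ^ 2 ≤ f y) (x z : E) :
    f x - f xstar - ⟪gradient f x, x - xstar⟫
      + μ * ⟪z - xstar, x - xstar⟫ - μ / 2 * ‖z - xstar‖ ^ 2 ≤ 0 := by
  have hconv : f x - f xstar ≤ ⟪gradient f x, x - xstar⟫ - μ / 2 * ‖x - xstar‖ ^ 2 := by
    have h := hsc x xstar
    rw [← neg_sub x xstar, inner_neg_right, norm_neg] at h
    linarith
  have hsq := norm_sub_sq_real (x - xstar) (z - xstar)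
  rw [real_inner_comm] at hsq
  nlinarith [mul_nonneg hμ (sq_nonneg ‖(x - xstar) - (z - xstar)‖)]

lemma antitoneOn_nagEnergy (hμ : 0 ≤ μ) (hs : 4 * s ^ 2 = μ) (hf : Differentiable ℝ f)
    (hsc : ∀ x y : E, f x + ⟪gradient f x, y - x⟫ + μ / 2 * ‖y - x‖ ^ 2 ≤ f y)
    (hXc : ContinuousOn X (Set.Ici 0)) (hZc : ContinuousOn Z (Set.Ici 0))
    (hX : ∀ t > (0 : ℝ), HasDerivAt X ((2 / t * cothc (s * t)) • (Z t - X t)) t)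
    (hZ : ∀ t > (0 : ℝ),
      HasDerivAt Z ((t / 2 * tanhc (s * t)) • (μ • X t - μ • Z t - gradient f (X t))) t) :
    AntitoneOn (nagEnergy f s xstar X Z) (Set.Ici 0) := by
  refine antitoneOn_of_hasDerivWithinAt_nonpos
    (f' := fun t => scaledSinh s t * cosh (s * t) *
      (f (X t) - f xstar - ⟪gradient f (X t), X t - xstar⟫
        + μ * ⟪Z t - xstar, X t - xstar⟫ - μ / 2 * ‖Z t - xstar‖ ^ 2)) (convex_Ici 0)
    (continuousOn_nagEnergy hf.continuous hXc hZc) (fun t ht => ?_) (fun t ht => ?_)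
  · rw [interior_Ici] at ht
    exact (hasDerivAt_nagEnergy hs ht (hf _) (hX t ht) (hZ t ht)).hasDerivWithinAt
  · rw [interior_Ici] at ht
    exact mul_nonpos_of_nonneg_of_nonpos (mul_pos (scaledSinh_pos s ht) (cosh_pos _)).le
      (nagEnergy_deriv_nonpos hμ hsc _ _)

end Energy

theorem unified_nag_system_convergence_general
    {E : Type*} [NormedAddCommGroup E] [InnerProductSpace ℝ E] [FiniteDimensional ℝ E]
    (μ : ℝ) (hμ : 0 ≤ μ)
    (f : E → ℝ) (hf : Differentiable ℝ f)
    (hsc : ∀ x y : E, f x + ⟪gradient f x, y - x⟫ + μ / 2 * ‖y - x‖ ^ 2 ≤ f y)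
    (xstar : E)
    (x₀ : E) (X Z : ℝ → E)
    (hX : ContDiffOn ℝ 1 X (Set.Ici 0)) (hZ : ContDiffOn ℝ 1 Z (Set.Ici 0))
    (hZ0 : Z 0 = x₀)
    (hflow1 : ∀ t > (0 : ℝ),
      HasDerivAt X ((2 / t * cothc (Real.sqrt μ / 2 * t)) • (Z t - X t)) t)
    (hflow2 : ∀ t > (0 : ℝ),
      HasDerivAt Z ((t / 2 * tanhc (Real.sqrt μ / 2 * t)) •
        (μ • X t - μ • Z t - gradient f (X t))) t) :
    ∀ t > (0 : ℝ), f (X t) - f xstar ≤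
      2 / t ^ 2 * cschc (Real.sqrt μ / 2 * t) ^ 2 * ‖x₀ - xstar‖ ^ 2 := by
  intro t ht
  have hs : 4 * (√μ / 2) ^ 2 = μ := by
    rw [div_pow, sq_sqrt hμ]; ring
  have hV := antitoneOn_nagEnergy (xstar := xstar) hμ hs hf hsc hX.continuousOn hZ.continuousOn
    hflow1 hflow2 Set.self_mem_Ici (Set.mem_Ici.2 ht.le) ht.le
  rw [nagEnergy_zero, hZ0] at hV
  rw [two_div_sq_mul_cschc_sq]
  exact sub_le_of_nagEnergy_le ht hV

/-- Convergence rate of the unified NAG system: for all `t > 0`,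
`f(X(t)) − f(x*) ≤ (2/t²)·cschc²((√μ/2)t)·‖x₀ − x*‖²`. -/
theorem unified_nag_system_convergence
    {E : Type*} [NormedAddCommGroup E] [InnerProductSpace ℝ E] [FiniteDimensional ℝ E]
    (μ : ℝ) (hμ : 0 ≤ μ)
    (f : E → ℝ) (hf : Differentiable ℝ f)
    (hsc : ∀ x y : E, f x + ⟪gradient f x, y - x⟫ + μ / 2 * ‖y - x‖ ^ 2 ≤ f y)
    (xstar : E) (hmin : ∀ x, f xstar ≤ f x)
    (x₀ : E) (X Z : ℝ → E)
    (hX : ContDiffOn ℝ 1 X (Set.Ici 0)) (hZ : ContDiffOn ℝ 1 Z (Set.Ici 0))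
    (hX0 : X 0 = x₀) (hZ0 : Z 0 = x₀)
    (hflow1 : ∀ t > (0 : ℝ),
      HasDerivAt X ((2 / t * cothc (Real.sqrt μ / 2 * t)) • (Z t - X t)) t)
    (hflow2 : ∀ t > (0 : ℝ),
      HasDerivAt Z ((t / 2 * tanhc (Real.sqrt μ / 2 * t)) •
        (μ • X t - μ • Z t - gradient f (X t))) t) :
    ∀ t > (0 : ℝ), f (X t) - f xstar ≤
      2 / t ^ 2 * cschc (Real.sqrt μ / 2 * t) ^ 2 * ‖x₀ - xstar‖ ^ 2 :=
  unified_nag_system_convergence_general μ hμ f hf hsc xstar x₀ X Z hX hZ hZ0 hflow1 hflow2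
end

section
/- Let p ≥ 2 be a real number and let S : [0,∞) → ℝ be differentiable with S(0) = 0 and S′(t) = (1 + S(t)^p)^{1/p} for all t ≥ 0. Then the function sinhc_p : [0,∞) → ℝ defined by sinhc_p(t) = S(t)/t for t > 0 and sinhc_p(0) = 1 is monotonically nondecreasing on [0,∞). -/
/-!
`S` solves the autonomous equation `S' = F ∘ S` with `F x = (1 + x ^ p) ^ (1 / p)`, and `F` is
nonnegative everywhere, at least `1` and nondecreasing on `[0, ∞)`. Hence `S` is nondecreasing and
nonnegative, so `S' = F ∘ S` is nondecreasing and `S` is convex; convexity with `S 0 = 0` makes the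
slope `S t / t` nondecreasing for `t > 0`. Since `S' ≥ 1` we also get `S t ≥ t`, i.e. the slope
never drops below the value `1` assigned at `t = 0`.
-/

open Set

/-- For a negative base, `x ^ y = exp (log x * y) * cos (y * π)`, and the cosine is nonnegative
when `|y| ≤ 1 / 2`. -/
lemma Real.rpow_nonneg_of_abs_le_half (x : ℝ) {y : ℝ} (hy : |y| ≤ 1 / 2) : 0 ≤ x ^ y := by
  rcases le_or_gt 0 x with hx | hx
  · exact Real.rpow_nonneg hx y
  rw [Real.rpow_def_of_neg hx]
  obtain ⟨hy₁, hy₂⟩ := abs_le.mp hy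
  refine mul_nonneg (Real.exp_nonneg _) (Real.cos_nonneg_of_mem_Icc ⟨?_, ?_⟩) <;>
    nlinarith [Real.pi_pos]

section Ici

variable {a : ℝ} {f f' : ℝ → ℝ}

lemma hasDerivAt_of_hasDerivWithinAt_Ici (hf : ∀ t ∈ Ici a, HasDerivWithinAt f (f' t) (Ici a) t)
    {t : ℝ} (ht : a < t) : HasDerivAt f (f' t) t :=
  (hf t ht.le).hasDerivAt (Ici_mem_nhds ht)

lemma monotoneOn_Ici_of_hasDerivWithinAt_nonneg
    (hf : ∀ t ∈ Ici a, HasDerivWithinAt f (f' t) (Ici a) t) (hf' : ∀ t ∈ Ioi a, 0 ≤ f' t) :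
    MonotoneOn f (Ici a) := by
  refine monotoneOn_of_hasDerivWithinAt_nonneg (convex_Ici a)
    (fun t ht => (hf t ht).continuousWithinAt) (fun t ht => ?_) (by rwa [interior_Ici])
  rw [interior_Ici] at ht ⊢
  exact (hasDerivAt_of_hasDerivWithinAt_Ici hf ht).hasDerivWithinAt

lemma convexOn_Ici_of_hasDerivWithinAt_of_monotoneOn
    (hf : ∀ t ∈ Ici a, HasDerivWithinAt f (f' t) (Ici a) t) (hf' : MonotoneOn f' (Ioi a)) :
    ConvexOn ℝ (Ici a) f := by
  have hf_diff : ∀ t ∈ Ioi a, HasDerivAt f (f' t) t := fun t ht =>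
    hasDerivAt_of_hasDerivWithinAt_Ici hf ht
  refine MonotoneOn.convexOn_of_deriv (convex_Ici a) (fun t ht => (hf t ht).continuousWithinAt) ?_ ?_
    <;> rw [interior_Ici]
  · exact fun t ht => (hf_diff t ht).differentiableAt.differentiableWithinAt
  · exact hf'.congr fun t ht => (hf_diff t ht).deriv.symm

end Ici

lemma ConvexOn.monotoneOn_ite_div_self {f : ℝ → ℝ} (hf : ConvexOn ℝ (Ici 0) f) (hf0 : f 0 = 0)
    (hle : ∀ t ∈ Ioi 0, t ≤ f t) :
    MonotoneOn (fun t => if t = 0 then 1 else f t / t) (Ici 0) := by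
  intro s hs t ht hst
  rcases hst.eq_or_lt with rfl | hst
  · rfl
  have ht0 : 0 < t := hs.trans_lt hst
  rcases (mem_Ici.mp hs).eq_or_lt with rfl | hs0
  · simpa [ht0.ne', le_div_iff₀ ht0] using hle t ht0
  · simpa [hs0.ne', ht0.ne', hf0] using
      hf.secant_mono self_mem_Ici hs ht hs0.ne' ht0.ne' hst.le

section Autonomous

variable {F S : ℝ → ℝ}

lemma nonneg_of_hasDerivWithinAt_comp
    (hS : ∀ t ∈ Ici (0 : ℝ), HasDerivWithinAt S (F (S t)) (Ici 0) t) (hF : ∀ x, 0 ≤ F x)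
    (hS0 : S 0 = 0) {t : ℝ} (ht : 0 ≤ t) : 0 ≤ S t :=
  hS0 ▸ monotoneOn_Ici_of_hasDerivWithinAt_nonneg hS (fun _ _ => hF _) self_mem_Ici ht ht

lemma convexOn_Ici_of_hasDerivWithinAt_comp
    (hS : ∀ t ∈ Ici (0 : ℝ), HasDerivWithinAt S (F (S t)) (Ici 0) t) (hF : ∀ x, 0 ≤ F x)
    (hF_mono : MonotoneOn F (Ici 0)) (hS0 : S 0 = 0) : ConvexOn ℝ (Ici 0) S := by
  have hS_mono : MonotoneOn S (Ioi 0) :=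
    (monotoneOn_Ici_of_hasDerivWithinAt_nonneg hS fun _ _ => hF _).mono Ioi_subset_Ici_self
  exact convexOn_Ici_of_hasDerivWithinAt_of_monotoneOn hS <|
    hF_mono.comp hS_mono fun t ht => nonneg_of_hasDerivWithinAt_comp hS hF hS0 ht.le

lemma self_le_of_hasDerivWithinAt_comp
    (hS : ∀ t ∈ Ici (0 : ℝ), HasDerivWithinAt S (F (S t)) (Ici 0) t) (hF : ∀ x, 0 ≤ F x)
    (hF_one : ∀ x ∈ Ici 0, 1 ≤ F x) (hS0 : S 0 = 0) {t : ℝ} (ht : 0 ≤ t) : t ≤ S t := by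
  have hsub : MonotoneOn (fun t => S t - t) (Ici 0) :=
    monotoneOn_Ici_of_hasDerivWithinAt_nonneg (fun t ht => (hS t ht).sub (hasDerivWithinAt_id t _))
      fun t ht => sub_nonneg.mpr <| hF_one _ <| nonneg_of_hasDerivWithinAt_comp hS hF hS0 ht.le
  simpa [hS0] using hsub self_mem_Ici ht ht

end Autonomous

section OneAddRpow

variable {p : ℝ}

lemma one_add_rpow_rpow_nonneg (hp : 2 ≤ p) (x : ℝ) : 0 ≤ (1 + x ^ p) ^ (1 / p) := by
  refine Real.rpow_nonneg_of_abs_le_half _ ?_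
  rw [abs_of_nonneg (by positivity)]
  exact one_div_le_one_div_of_le two_pos hp

lemma one_le_one_add_rpow_rpow (hp : 0 ≤ p) {x : ℝ} (hx : 0 ≤ x) : 1 ≤ (1 + x ^ p) ^ (1 / p) :=
  Real.one_le_rpow (le_add_of_nonneg_right (Real.rpow_nonneg hx p)) (by positivity)

lemma monotoneOn_one_add_rpow_rpow (hp : 0 ≤ p) :
    MonotoneOn (fun x : ℝ => (1 + x ^ p) ^ (1 / p)) (Ici 0) := fun x hx _ _ hxy =>
  Real.rpow_le_rpow (add_nonneg zero_le_one (Real.rpow_nonneg hx p))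
    (add_le_add_right (Real.rpow_le_rpow hx hxy hp) 1)
    (by positivity)

end OneAddRpow

/-- The function `sinhc_p(t) = sinh_p(t)/t` (with value `1` at `t = 0`) is monotonically
nondecreasing on `[0, ∞)`, where `sinh_p = S` solves `S(0) = 0`,
`S′(t) = (1 + S(t)^p)^{1/p}`. -/
theorem sinhcp_monotone
    (p : ℝ) (hp : 2 ≤ p)
    (S : ℝ → ℝ) (hS0 : S 0 = 0)
    (hS : ∀ t ∈ Set.Ici (0 : ℝ),
      HasDerivWithinAt S ((1 + S t ^ p) ^ (1 / p)) (Set.Ici 0) t) :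
    MonotoneOn (fun t => if t = 0 then 1 else S t / t) (Set.Ici 0) := by
  have hp0 : 0 ≤ p := by linarith
  have hF := one_add_rpow_rpow_nonneg hp
  have hS_convex := convexOn_Ici_of_hasDerivWithinAt_comp hS hF
    (monotoneOn_one_add_rpow_rpow hp0) hS0
  exact hS_convex.monotoneOn_ite_div_self hS0 fun t ht =>
    self_le_of_hasDerivWithinAt_comp hS hF (fun _ hx => one_le_one_add_rpow_rpow hp0 hx) hS0 ht.le
end
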